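/- arXiv:2005.00566 — 2 statements merged into one kernel-verified Lean document; each statement's English description precedes it below -/
import Mathlib

section
/- For every boolean function f, n(f) ≤ (1/2)·4^{C(f)}, where C(f) is the certificate complexity. -/
open Finset
open scoped Classical

namespace BF

noncomputable section

/-- flip the bits of `x` belonging to `B`. -/
def flipS {n : ℕ} (x : Fin n → Bool) (B : Finset (Fin n)) : Fin n → Bool :=
  fun i => if i ∈ B then !(x i) else x i

/-- flip the `i`-th bit of `x`. -/
def flip1 {n : ℕ} (x : Fin n → Bool) (i : Fin n) : Fin n → Bool :=
  fun j => if j = i then !(x j) else x j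

/-- real value of a boolean. -/
def bval (b : Bool) : ℝ := if b then 1 else 0

/-- coefficient of the monomial `∏_{i ∈ S} x_i` in the unique multilinear
real polynomial expansion of `f` (Möbius inversion over the subcube lattice). -/
def coeffS {n : ℕ} (f : (Fin n → Bool) → ℝ) (S : Finset (Fin n)) : ℝ :=
  ∑ T ∈ S.powerset, (-1 : ℝ) ^ (S.card - T.card) * f (fun i => decide (i ∈ T))

/-- degree of the multilinear expansion of a real-valued function on the cube. -/
def degF {n : ℕ} (f : (Fin n → Bool) → ℝ) : ℕ :=
  (Finset.univ.filter fun S : Finset (Fin n) => coeffS f S ≠ 0).sup Finset.card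

/-- degree of a boolean function. -/
def degB {n : ℕ} (f : (Fin n → Bool) → Bool) : ℕ := degF (fun x => bval (f x))

/-- block sensitivity of `f` at `x`. -/
def bsAt {n : ℕ} (f : (Fin n → Bool) → Bool) (x : Fin n → Bool) : ℕ :=
  (Finset.univ.filter fun 𝓑 : Finset (Finset (Fin n)) =>
      (∀ B ∈ 𝓑, f (flipS x B) ≠ f x) ∧
      ∀ A ∈ 𝓑, ∀ B ∈ 𝓑, A ≠ B → Disjoint A B).sup Finset.card

/-- block sensitivity of `f`. -/
def bs {n : ℕ} (f : (Fin n → Bool) → Bool) : ℕ := Finset.univ.sup (bsAt f)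

/-- sensitivity of `f` at `x`. -/
def sx {n : ℕ} (f : (Fin n → Bool) → Bool) (x : Fin n → Bool) : ℕ :=
  (Finset.univ.filter fun i => f (flip1 x i) ≠ f x).card

/-- (maximum) sensitivity of `f`. -/
def sens {n : ℕ} (f : (Fin n → Bool) → Bool) : ℕ := Finset.univ.sup (sx f)

/-- coordinate `i` is relevant for `f`. -/
def Rel {n : ℕ} (i : Fin n) (f : (Fin n → Bool) → Bool) : Prop :=
  ∃ x, f (flip1 x i) ≠ f x

/-- the set of relevant coordinates of `f`. -/
def relSet {n : ℕ} (f : (Fin n → Bool) → Bool) : Finset (Fin n) :=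
  Finset.univ.filter fun i => Rel i f

/-- the number of relevant variables `n(f)`. -/
def nrel {n : ℕ} (f : (Fin n → Bool) → Bool) : ℕ := (relSet f).card

/-- influence of coordinate `i` on `f` (uniform distribution). -/
def infl {n : ℕ} (f : (Fin n → Bool) → Bool) (i : Fin n) : ℝ :=
  ((Finset.univ.filter fun x : Fin n → Bool => f x ≠ f (flip1 x i)).card : ℝ) / 2 ^ n

/-- total influence `I[f]`. -/
def totalInf {n : ℕ} (f : (Fin n → Bool) → Bool) : ℝ := ∑ i, infl f i

/-- restriction of `f` fixing the coordinates in `H` according to `α`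
(viewed as a function on the full cube not depending on the coordinates in `H`). -/
def restrict {n : ℕ} (f : (Fin n → Bool) → Bool) (H : Finset (Fin n))
    (α : Fin n → Bool) : (Fin n → Bool) → Bool :=
  fun x => f (fun i => if i ∈ H then α i else x i)

/-- certificate complexity of `f` at `x`. -/
def certAt {n : ℕ} (f : (Fin n → Bool) → Bool) (x : Fin n → Bool) : ℕ :=
  sInf {k | ∃ S : Finset (Fin n), S.card = k ∧
    ∀ y, (∀ i ∈ S, y i = x i) → f y = f x}

/-- certificate complexity `C(f)`. -/
def certC {n : ℕ} (f : (Fin n → Bool) → Bool) : ℕ := Finset.univ.sup (certAt f)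

/-- `f` is in standard form: `f(0) = 0` and `f(e_i) = 1` for every basis vector. -/
def stdForm {b : ℕ} (f : (Fin b → Bool) → Bool) : Prop :=
  f (fun _ => false) = false ∧ ∀ i : Fin b, f (fun j => decide (j = i)) = true

end

end BF

open BF

/-! For each relevant variable `i`, the minimal certificates at the two ends of a sensitive edge
in direction `i` together fix, besides `x_i`, at most `2C - 2` coordinates; on the subcube they
fix, `f` is `x_i` or its negation. Two such subcubes for `i ≠ j` can only meet if each fixes the
other's direction. Hence the edges of direction `i` inside the `i`-th subcube form a forest on
the cube, whose degrees sum to at most `2 ^ (n + 1)`; each of the `n(f)` subcubes contributes at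
least `2 ^ (n - 2C + 2)`. -/

namespace SimpleGraph

variable {V : Type*} {G : SimpleGraph V}

theorem exists_nonbacktracking_walk {W : Set V} {v : V} (hv : v ∈ W)
    (hW : ∀ a ∈ W, ∀ u, ∃ w ∈ W, G.Adj a w ∧ w ≠ u) :
    ∃ y : ℕ → V, (∀ t, G.Adj (y t) (y (t + 1))) ∧ ∀ t, y (t + 2) ≠ y t := by
  obtain ⟨w, hw, hvw, -⟩ := hW v hv v
  choose! next hnextW hadj hne using hW
  let p : ℕ → V × V := fun t => (fun q : V × V => (q.2, next q.2 q.1))^[t] (v, w)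
  have hp : ∀ t, p (t + 1) = ((p t).2, next (p t).2 (p t).1) := fun t =>
    Function.iterate_succ_apply' _ _ _
  have hinv : ∀ t, (p t).2 ∈ W ∧ G.Adj (p t).1 (p t).2 := by
    intro t
    induction t with
    | zero => exact ⟨hw, hvw⟩
    | succ t ih => rw [hp]; exact ⟨hnextW _ ih.1 _, hadj _ ih.1 _⟩
  refine ⟨fun t => (p t).1, fun t => ?_, fun t => ?_⟩
  · simpa only [hp] using (hinv t).2
  · simp only [hp]
    exact hne _ (hinv t).1 _

variable [Fintype V] [DecidableEq V] [DecidableRel G.Adj]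

theorem sum_card_neighborFinset_inter_insert {v : V} {W : Finset V} (hv : v ∉ W) :
    ∑ z ∈ insert v W, #(G.neighborFinset z ∩ insert v W)
      = ∑ z ∈ W, #(G.neighborFinset z ∩ W) + 2 * #(G.neighborFinset v ∩ W) := by
  have hself : #(G.neighborFinset v ∩ insert v W) = #(G.neighborFinset v ∩ W) := by
    rw [inter_insert_of_notMem (by simp)]
  have hother : ∀ z ∈ W, #(G.neighborFinset z ∩ insert v W)
      = #(G.neighborFinset z ∩ W) + if G.Adj v z then 1 else 0 := by
    intro z hz
    by_cases hvz : G.Adj v z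
    · rw [inter_insert_of_mem (by simpa using hvz.symm),
        card_insert_of_notMem (fun h => hv (mem_inter.1 h).2), if_pos hvz]
    · rw [inter_insert_of_notMem (by simpa [adj_comm] using hvz), if_neg hvz, add_zero]
  have hcount : ∑ z ∈ W, (if G.Adj v z then 1 else 0) = #(G.neighborFinset v ∩ W) := by
    rw [← card_filter, inter_comm, ← filter_mem_eq_inter]
    simp only [mem_neighborFinset]
  rw [sum_insert hv, hself, sum_congr rfl hother, sum_add_distrib, hcount]
  ring

/-- `G` is a forest: every nonempty `W` contains a leaf of the induced subgraph,
since otherwise a non-backtracking walk could go on forever inside `W`. -/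
theorem sum_card_neighborFinset_inter_le
    (hG : ∀ y : ℕ → V, (∀ t, G.Adj (y t) (y (t + 1))) → ∃ t, y (t + 2) = y t)
    (W : Finset V) : ∑ v ∈ W, #(G.neighborFinset v ∩ W) ≤ 2 * #W := by
  induction W using Finset.strongInduction with
  | H W ih =>
  rcases W.eq_empty_or_nonempty with rfl | ⟨v₀, hv₀⟩
  · simp
  obtain ⟨v, hvW, hleaf⟩ : ∃ v ∈ W, #(G.neighborFinset v ∩ W) ≤ 1 := by
    by_contra! hdeg
    have hW : ∀ a ∈ (W : Set V), ∀ u, ∃ w ∈ (W : Set V), G.Adj a w ∧ w ≠ u := by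
      intro a ha u
      obtain ⟨w, hw⟩ : ((G.neighborFinset a ∩ W).erase u).Nonempty := by
        rw [← card_pos]
        have := pred_card_le_card_erase (s := G.neighborFinset a ∩ W) (a := u)
        have := hdeg a ha
        omega
      simp only [mem_erase, mem_inter, mem_neighborFinset] at hw
      exact ⟨w, hw.2.2, hw.2.1, hw.1⟩
    obtain ⟨y, hadj, hnb⟩ := exists_nonbacktracking_walk hv₀ hW
    obtain ⟨t, ht⟩ := hG y hadj
    exact hnb t ht
  have hle : #(G.neighborFinset v ∩ W.erase v) ≤ 1 :=
    (card_le_card (inter_subset_inter_left (erase_subset v W))).trans hleaf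
  have hcard : #(W.erase v) + 1 = #W := card_erase_add_one hvW
  have hrest := ih _ (erase_ssubset hvW)
  have hsum := sum_card_neighborFinset_inter_insert (G := G) (notMem_erase v W)
  rw [insert_erase hvW] at hsum
  omega

end SimpleGraph

namespace BF

variable {n : ℕ}

@[simp] theorem flip1_self (x : Fin n → Bool) (i : Fin n) : flip1 x i i = !x i := by
  simp [flip1]

@[simp] theorem flip1_of_ne {j i : Fin n} (h : j ≠ i) (x : Fin n → Bool) : flip1 x i j = x j := by
  simp [flip1, h]

@[simp] theorem flip1_flip1 (x : Fin n → Bool) (i : Fin n) : flip1 (flip1 x i) i = x := by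
  funext j
  by_cases h : j = i <;> simp [flip1, h]

theorem flip1_ne_self (x : Fin n → Bool) (i : Fin n) : flip1 x i ≠ x := fun h => by
  simpa using congrFun h i

theorem flip1_injective (x : Fin n → Bool) : Function.Injective (flip1 x) := by
  intro i j h
  by_contra hij
  simpa [hij] using congrFun h i

def subcube (U : Finset (Fin n)) (x : Fin n → Bool) : Finset (Fin n → Bool) :=
  univ.filter fun y => ∀ j ∈ U, y j = x j

@[simp] theorem mem_subcube {U : Finset (Fin n)} {x y : Fin n → Bool} :
    y ∈ subcube U x ↔ ∀ j ∈ U, y j = x j := by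
  simp [subcube]

theorem flip1_mem_subcube {U : Finset (Fin n)} {x y : Fin n → Bool} {i : Fin n} (hi : i ∉ U)
    (hy : y ∈ subcube U x) : flip1 y i ∈ subcube U x := by
  rw [mem_subcube] at hy ⊢
  intro j hj
  rw [flip1_of_ne (ne_of_mem_of_not_mem hj hi), hy j hj]

theorem card_subcube_mul_two_pow (U : Finset (Fin n)) (x : Fin n → Bool) :
    #(subcube U x) * 2 ^ #U = 2 ^ n := by
  have hpi : subcube U x = Fintype.piFinset fun j => if j ∈ U then {x j} else univ := by
    ext y
    simp only [mem_subcube, Fintype.mem_piFinset]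
    refine forall_congr' fun j => ?_
    split_ifs with hj <;> simp [hj]
  have hcard : ∀ j, #(if j ∈ U then {x j} else (univ : Finset Bool)) = if j ∈ U then 1 else 2 := by
    intro j
    split_ifs <;> simp
  rw [hpi, Fintype.card_piFinset, prod_congr rfl fun j _ => hcard j, prod_ite, prod_const_one,
    one_mul, prod_const, ← pow_add, filter_not, filter_mem_eq_inter, univ_inter,
    ← compl_eq_univ_sdiff, card_compl_add_card, Fintype.card_fin]

def IsDictatorOn (f : (Fin n → Bool) → Bool) (Q : Finset (Fin n → Bool)) (i : Fin n) : Prop :=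
  ∃ c, ∀ y ∈ Q, f y = (y i ^^ c)

theorem exists_certificate (f : (Fin n → Bool) → Bool) (x : Fin n → Bool) :
    ∃ S : Finset (Fin n), #S ≤ certC f ∧ ∀ y, (∀ i ∈ S, y i = x i) → f y = f x := by
  have hne : {k | ∃ S : Finset (Fin n), #S = k ∧ ∀ y, (∀ i ∈ S, y i = x i) → f y = f x}.Nonempty :=
    ⟨n, univ, by simp, fun y hy => congrArg f (funext fun j => hy j (mem_univ j))⟩
  obtain ⟨S, hS, hcert⟩ := Nat.sInf_mem hne
  exact ⟨S, hS ▸ le_sup (f := certAt f) (mem_univ x), hcert⟩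

theorem Rel.exists_isDictatorOn_subcube {f : (Fin n → Bool) → Bool} {i : Fin n} (hi : Rel i f) :
    ∃ U x, i ∉ U ∧ #U + 2 ≤ 2 * certC f ∧ IsDictatorOn f (subcube U x) i := by
  obtain ⟨x, hx⟩ := hi
  obtain ⟨S, hS, hcertS⟩ := exists_certificate f x
  obtain ⟨T, hT, hcertT⟩ := exists_certificate f (flip1 x i)
  have hiS : i ∈ S := by
    by_contra hiS
    exact hx (hcertS _ fun j hj => flip1_of_ne (ne_of_mem_of_not_mem hj hiS) x)
  have hiT : i ∈ T := by
    by_contra hiT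
    refine hx (hcertT x fun j hj => ?_).symm
    rw [flip1_of_ne (ne_of_mem_of_not_mem hj hiT)]
  refine ⟨(S ∪ T).erase i, x, notMem_erase i _, ?_, x i ^^ f x, fun y hy => ?_⟩
  · have h₁ := card_erase_add_one (mem_union_left T hiS)
    have h₂ := card_union_add_card_inter S T
    have h₃ : 0 < #(S ∩ T) := card_pos.2 ⟨i, mem_inter.2 ⟨hiS, hiT⟩⟩
    omega
  rw [mem_subcube] at hy
  have hagree : ∀ j ∈ S ∪ T, j ≠ i → y j = x j := fun j hj hji => hy j (mem_erase.2 ⟨hji, hj⟩)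
  by_cases hyi : y i = x i
  · have : f y = f x := hcertS y fun j hj => by
      rcases eq_or_ne j i with rfl | hji
      exacts [hyi, hagree j (mem_union_left T hj) hji]
    simp [this, hyi]
  · have : f y = f (flip1 x i) := hcertT y fun j hj => by
      rcases eq_or_ne j i with rfl | hji
      · rw [flip1_self, Bool.eq_not.2 hyi]
      · rw [flip1_of_ne hji, hagree j (mem_union_right S hj) hji]
    simp [this, Bool.eq_not.2 hyi, Bool.eq_not.2 hx]

/-- Flipping `j` at a common point would change `f` by the second dictator, but not by the
first one if `j` were free there. -/
theorem IsDictatorOn.mem_of_mem_subcube {f : (Fin n → Bool) → Bool} {U V : Finset (Fin n)}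
    {x z y : Fin n → Bool} {i j : Fin n} (hi : IsDictatorOn f (subcube U x) i)
    (hj : IsDictatorOn f (subcube V z) j) (hij : i ≠ j) (hjV : j ∉ V)
    (hyU : y ∈ subcube U x) (hyV : y ∈ subcube V z) : j ∈ U := by
  by_contra hjU
  obtain ⟨c, hc⟩ := hi
  obtain ⟨d, hd⟩ := hj
  have h₁ : f (flip1 y j) = f y := by
    rw [hc _ (flip1_mem_subcube hjU hyU), hc y hyU, flip1_of_ne hij]
  have h₂ : f (flip1 y j) = !f y := by
    rw [hd _ (flip1_mem_subcube hjV hyV), hd y hyV, flip1_self, Bool.not_xor]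
  exact Bool.not_ne_self (f y) (h₂ ▸ h₁)

theorem exists_flip_of_ne {y : ℕ → Fin n → Bool} {d : ℕ → Fin n}
    (hy : ∀ t, y (t + 1) = flip1 (y t) (d t)) {j : Fin n} {s u : ℕ} (hsu : s ≤ u)
    (hne : y u j ≠ y s j) : ∃ t, s ≤ t ∧ t < u ∧ d t = j := by
  induction u, hsu using Nat.le_induction with
  | base => exact absurd rfl hne
  | succ u hsu ih =>
    by_cases hdu : d u = j
    · exact ⟨u, hsu, u.lt_succ_self, hdu⟩
    · rw [hy, flip1_of_ne (Ne.symm hdu)] at hne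
      obtain ⟨t, hst, htu, hdt⟩ := ih hne
      exact ⟨t, hst, htu.trans u.lt_succ_self, hdt⟩

/-- Take uses `a < b` of one direction at minimal distance. As `d (a + 1)` is fixed on the
subcube of `d a`, which contains `y (a + 1)` and `y b`, it is flipped again strictly between
`a + 1` and `b`: a closer pair. -/
theorem false_of_subcube_walk {U : Fin n → Finset (Fin n)} {x : Fin n → Fin n → Bool}
    {y : ℕ → Fin n → Bool} {d : ℕ → Fin n} (hy : ∀ t, y (t + 1) = flip1 (y t) (d t))
    (hfree : ∀ t, d t ∉ U (d t)) (hmem : ∀ t, y t ∈ subcube (U (d t)) (x (d t)))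
    (hnext : ∀ t, d (t + 1) ∈ U (d t)) : False := by
  have hgap : ∃ g, 0 < g ∧ ∃ a, d (a + g) = d a := by
    obtain ⟨a, b, hab, hd⟩ := Finite.exists_ne_map_eq_of_infinite d
    rcases hab.lt_or_gt with h | h
    · exact ⟨b - a, by omega, a, by rw [Nat.add_sub_cancel' h.le, hd]⟩
    · exact ⟨a - b, by omega, b, by rw [Nat.add_sub_cancel' h.le, hd]⟩
  obtain ⟨hpos, a, ha⟩ := Nat.find_spec hgap
  set g := Nat.find hgap
  set j := d (a + 1)
  have hg : 2 ≤ g := by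
    by_contra hg
    have hg1 : g = 1 := by omega
    rw [hg1] at ha
    exact hfree a (ha ▸ hnext a)
  have h₁ : y (a + 1) j = x (d a) j := by
    rw [hy]
    exact mem_subcube.1 (flip1_mem_subcube (hfree a) (hmem a)) j (hnext a)
  have h₂ : y (a + g) j = x (d a) j := by
    have := mem_subcube.1 (hmem (a + g))
    rw [ha] at this
    exact this j (hnext a)
  have h₃ : y (a + g) j ≠ y (a + 2) j := by
    rw [h₂, ← h₁, show a + 2 = a + 1 + 1 by rfl, hy (a + 1), flip1_self]
    exact (Bool.not_ne_self _).symm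
  obtain ⟨c, hac, hcg, hc⟩ := exists_flip_of_ne hy (by omega) h₃
  exact Nat.find_min hgap (show c - (a + 1) < g by omega)
    ⟨by omega, a + 1, by rw [Nat.add_sub_cancel' (by omega), hc]⟩

section Family

variable {R : Finset (Fin n)} {U : Fin n → Finset (Fin n)} {x : Fin n → Fin n → Bool}

def flipGraph (R : Finset (Fin n)) (U : Fin n → Finset (Fin n)) (x : Fin n → Fin n → Bool) :
    SimpleGraph (Fin n → Bool) where
  Adj y z := ∃ i ∈ R, y ∈ subcube (U i) (x i) ∧ z ∈ subcube (U i) (x i) ∧ z = flip1 y i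
  symm := ⟨fun _ _ ⟨i, hi, hy, hz, h⟩ => ⟨i, hi, hz, hy, by rw [h, flip1_flip1]⟩⟩
  loopless := ⟨fun y ⟨i, _, _, _, h⟩ => flip1_ne_self y i h.symm⟩

theorem flipGraph_adj {y z : Fin n → Bool} : (flipGraph R U x).Adj y z ↔
    ∃ i ∈ R, y ∈ subcube (U i) (x i) ∧ z ∈ subcube (U i) (x i) ∧ z = flip1 y i :=
  Iff.rfl

theorem degree_flipGraph (hU : ∀ i ∈ R, i ∉ U i) (y : Fin n → Bool) :
    (flipGraph R U x).degree y = #(R.filter fun i => y ∈ subcube (U i) (x i)) := by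
  rw [← SimpleGraph.card_neighborFinset_eq_degree, ← card_image_of_injective _ (flip1_injective y)]
  congr 1
  ext z
  simp only [SimpleGraph.mem_neighborFinset, flipGraph_adj, mem_image, mem_filter]
  constructor
  · rintro ⟨i, hi, hy, -, rfl⟩
    exact ⟨i, ⟨hi, hy⟩, rfl⟩
  · rintro ⟨i, ⟨hi, hy⟩, rfl⟩
    exact ⟨i, hi, hy, flip1_mem_subcube (hU i hi) hy, rfl⟩

theorem flipGraph_walk_backtracks (hU : ∀ i ∈ R, i ∉ U i)
    (hcross : ∀ i ∈ R, ∀ j ∈ R, i ≠ j → ∀ y ∈ subcube (U i) (x i), y ∈ subcube (U j) (x j) →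
      j ∈ U i)
    (y : ℕ → Fin n → Bool) (hy : ∀ t, (flipGraph R U x).Adj (y t) (y (t + 1))) :
    ∃ t, y (t + 2) = y t := by
  by_contra! hback
  simp only [flipGraph_adj] at hy
  choose d hdR hmem hmem' hstep using hy
  have hne : ∀ t, d t ≠ d (t + 1) := fun t h => hback t <| by
    rw [show t + 2 = t + 1 + 1 by rfl, hstep (t + 1), hstep t, ← h, flip1_flip1]
  exact false_of_subcube_walk hstep (fun t => hU _ (hdR t)) hmem
    fun t => hcross _ (hdR t) _ (hdR (t + 1)) (hne t) _ (hmem' t) (hmem (t + 1))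

theorem sum_card_subcube_le (hU : ∀ i ∈ R, i ∉ U i)
    (hcross : ∀ i ∈ R, ∀ j ∈ R, i ≠ j → ∀ y ∈ subcube (U i) (x i), y ∈ subcube (U j) (x j) →
      j ∈ U i) :
    ∑ i ∈ R, #(subcube (U i) (x i)) ≤ 2 ^ (n + 1) := by
  have hforest := (flipGraph R U x).sum_card_neighborFinset_inter_le
    (flipGraph_walk_backtracks hU hcross) univ
  simp only [inter_univ, SimpleGraph.card_neighborFinset_eq_degree, degree_flipGraph hU, card_univ,
    Fintype.card_fun, Fintype.card_bool, Fintype.card_fin] at hforest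
  have hdouble := sum_card_bipartiteAbove_eq_sum_card_bipartiteBelow (s := R) (t := univ)
    (r := fun i y => y ∈ subcube (U i) (x i))
  simp only [bipartiteAbove, bipartiteBelow, filter_mem_eq_inter, univ_inter] at hdouble
  rw [hdouble, pow_succ, mul_comm]
  exact hforest

theorem two_mul_card_le_four_pow {C : ℕ} (hU : ∀ i ∈ R, i ∉ U i)
    (hcross : ∀ i ∈ R, ∀ j ∈ R, i ≠ j → ∀ y ∈ subcube (U i) (x i), y ∈ subcube (U j) (x j) →
      j ∈ U i)
    (hcard : ∀ i ∈ R, #(U i) + 2 ≤ 2 * C) : 2 * #R ≤ 4 ^ C := by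
  have hweight : ∀ i ∈ R, 4 * 2 ^ n ≤ #(subcube (U i) (x i)) * 4 ^ C := fun i hi => by
    rw [← card_subcube_mul_two_pow (U i) (x i), show 4 ^ C = 2 ^ (2 * C) by rw [pow_mul]; rfl]
    calc 4 * (#(subcube (U i) (x i)) * 2 ^ #(U i))
        = #(subcube (U i) (x i)) * 2 ^ (#(U i) + 2) := by ring
      _ ≤ #(subcube (U i) (x i)) * 2 ^ (2 * C) :=
        Nat.mul_le_mul_left _ (Nat.pow_le_pow_right two_pos (hcard i hi))
  have : 2 * #R * 2 ^ (n + 1) ≤ 4 ^ C * 2 ^ (n + 1) := calc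
    2 * #R * 2 ^ (n + 1) = ∑ _i ∈ R, 4 * 2 ^ n := by rw [sum_const, smul_eq_mul]; ring
    _ ≤ ∑ i ∈ R, #(subcube (U i) (x i)) * 4 ^ C := sum_le_sum hweight
    _ = (∑ i ∈ R, #(subcube (U i) (x i))) * 4 ^ C := (sum_mul ..).symm
    _ ≤ 2 ^ (n + 1) * 4 ^ C := Nat.mul_le_mul_right _ (sum_card_subcube_le hU hcross)
    _ = 4 ^ C * 2 ^ (n + 1) := mul_comm ..
  exact Nat.le_of_mul_le_mul_right this (by positivity)

end Family

end BF

/-- `n(f) ≤ (1/2)·4^{C(f)}`. -/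
theorem stmt16 {n : ℕ} (f : (Fin n → Bool) → Bool) :
    (nrel f : ℝ) ≤ 1 / 2 * (4 : ℝ) ^ certC f := by
  have hdict : ∀ i ∈ relSet f, ∃ U x, i ∉ U ∧ #U + 2 ≤ 2 * certC f ∧
      IsDictatorOn f (subcube U x) i := fun i hi =>
    Rel.exists_isDictatorOn_subcube (mem_filter.1 hi).2
  choose! U x hU hcard hdict using hdict
  have hbound : 2 * nrel f ≤ 4 ^ certC f :=
    two_mul_card_le_four_pow hU (fun i hi j hj hij y hyi hyj =>
      (hdict i hi).mem_of_mem_subcube (hdict j hj) hij (hU j hj) hyi hyj) hcard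
  have : (2 * nrel f : ℝ) ≤ 4 ^ certC f := by exact_mod_cast hbound
  linarith
end

section
/- Let f be a monotone boolean function computed by a decision tree of depth d whose root queries variable x, with subfunctions f_0 (x=0 branch) and f_1 (x=1 branch). If neither f_0 nor f_1 is constant, then C⁰_min(f_0) + C¹_min(f_1) ≤ |R(f_0) ∩ R(f_1)| + 1. -/
open Finset
open scoped Classical

open BF

/-- `C^b_min(g)`: the minimum, over inputs `y` with `g(y) = b`, of the size of a
smallest certificate of `g` at `y`. -/
noncomputable def cminVal {n : ℕ} (b : Bool) (g : (Fin n → Bool) → Bool) : ℕ :=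
  sInf {k | ∃ y : Fin n → Bool, ∃ S : Finset (Fin n), g y = b ∧ S.card = k ∧
    ∀ z, (∀ i ∈ S, z i = y i) → g z = b}

/-!
Let `I = R(f₀) ∩ R(f₁)`. Since `f₀ ≤ f₁`, every assignment to `I` forces `f₀ = 0` or `f₁ = 1`.
Switch the bits of `I` on one at a time: the all-zero assignment forces `f₀ = 0` (it cannot force
`f₁ = 1`, as `f₁` is monotone and not constant) and the all-one assignment does not, so some
assignment `1_S` forces `f₀ = 0` while `1_{S ∪ {j}}` forces `f₁ = 1`. By monotonicity the zeros
`I \ S` of the first and the ones `S ∪ {j}` of the second are certificates, of total size `|I| + 1`.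
-/

lemma Finset.exists_insert_not_of_empty_of_not {α : Type*} [DecidableEq α] {P : Finset α → Prop}
    (I : Finset α) (h₀ : P ∅) (hI : ¬P I) :
    ∃ S ⊆ I, ∃ j ∈ I, j ∉ S ∧ P S ∧ ¬P (insert j S) := by
  induction I using Finset.induction_on with
  | empty => exact absurd h₀ hI
  | insert a s ha ih =>
    by_cases hs : P s
    · exact ⟨s, Finset.subset_insert a s, a, Finset.mem_insert_self a s, ha, hs, hI⟩
    · obtain ⟨S, hS, j, hj, hjS, hPS, hPj⟩ := ih hs
      exact ⟨S, hS.trans (Finset.subset_insert a s), j, Finset.mem_insert_of_mem hj, hjS, hPS, hPj⟩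

namespace BF

variable {n : ℕ}

/-- `S` is a `b`-certificate of `g` at `y`. -/
def Forces (g : (Fin n → Bool) → Bool) (S : Finset (Fin n)) (y : Fin n → Bool) (b : Bool) :
    Prop :=
  ∀ z, (∀ i ∈ S, z i = y i) → g z = b

lemma Forces.apply_eq {g : (Fin n → Bool) → Bool} {S : Finset (Fin n)} {y : Fin n → Bool}
    {b : Bool} (h : Forces g S y b) : g y = b :=
  h y fun _ _ => rfl

lemma cminVal_le_of_forces {g : (Fin n → Bool) → Bool} {S : Finset (Fin n)} {y : Fin n → Bool}
    {b : Bool} (h : Forces g S y b) : cminVal b g ≤ S.card :=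
  Nat.sInf_le ⟨y, S, h.apply_eq, rfl, h⟩

lemma Monotone.forces_false {g : (Fin n → Bool) → Bool} (hg : Monotone g) {y : Fin n → Bool}
    (hy : g y = false) : Forces g (Finset.univ.filter fun i => y i = false) y false := by
  intro z hz
  have hzy : z ≤ y := fun i => by
    by_cases hi : y i = false
    · exact (hz i (by simpa using hi)).le
    · simp_all
  exact Bool.eq_false_of_le_false (hy ▸ hg hzy)

lemma Monotone.forces_true {g : (Fin n → Bool) → Bool} (hg : Monotone g) {y : Fin n → Bool}
    (hy : g y = true) : Forces g (Finset.univ.filter fun i => y i = true) y true := by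
  intro z hz
  have hyz : y ≤ z := fun i => by
    by_cases hi : y i = true
    · exact (hz i (by simpa using hi)).ge
    · simp_all
  exact le_antisymm (Bool.le_true _) (hy ▸ hg hyz)

lemma eq_of_disjoint_relSet_of_forall_notMem (g : (Fin n → Bool) → Bool)
    (s : Finset (Fin n)) (hs : Disjoint s (relSet g)) (w w' : Fin n → Bool)
    (h : ∀ i ∉ s, w i = w' i) : g w = g w' := by
  induction s using Finset.induction_on generalizing w with
  | empty => exact congrArg g (funext fun i => h i (Finset.notMem_empty i))
  | insert a s ha ih =>
    have hs' : Disjoint s (relSet g) := Finset.disjoint_of_subset_left (Finset.subset_insert a s) hs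
    by_cases hwa : w a = w' a
    · refine ih hs' w fun i hi => ?_
      by_cases hia : i = a
      · exact hia ▸ hwa
      · exact h i (by simp [hia, hi])
    · have hirr : ¬Rel a g := fun hrel =>
        Finset.disjoint_left.mp hs (Finset.mem_insert_self a s) (by simpa [relSet] using hrel)
      have hflip : ∀ x, g (flip1 x a) = g x := by simpa [Rel] using hirr
      rw [← hflip w]
      refine ih hs' _ fun i hi => ?_
      by_cases hia : i = a
      · subst hia
        simpa [flip1, Bool.eq_not_iff] using hwa
      · simpa [flip1, hia] using h i (by simp [hia, hi])

lemma eq_of_eqOn_relSet (g : (Fin n → Bool) → Bool) {w w' : Fin n → Bool}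
    (h : ∀ i ∈ relSet g, w i = w' i) : g w = g w' :=
  eq_of_disjoint_relSet_of_forall_notMem g (relSet g)ᶜ disjoint_compl_left w w'
    fun i hi => h i (by simpa using hi)

/-- Inputs `y` with `g₀ y = 1` and `z` with `g₁ z = 0` agreeing on `R(g₀) ∩ R(g₁)` would splice
into `u` (`y` on `R(g₀)`, `z` elsewhere) with `g₀ u = 1 > 0 = g₁ u`. -/
lemma forces_false_or_forces_true {g₀ g₁ : (Fin n → Bool) → Bool} (hle : g₀ ≤ g₁)
    (α : Fin n → Bool) :
    Forces g₀ (relSet g₀ ∩ relSet g₁) α false ∨ Forces g₁ (relSet g₀ ∩ relSet g₁) α true := by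
  by_contra hc
  simp only [Forces, not_or, not_forall, Bool.not_eq_false, Bool.not_eq_true] at hc
  obtain ⟨⟨y, hyα, hy⟩, ⟨z, hzα, hz⟩⟩ := hc
  let u : Fin n → Bool := fun i => if i ∈ relSet g₀ then y i else z i
  have hu₀ : g₀ u = g₀ y := eq_of_eqOn_relSet g₀ fun i hi => by simp [u, hi]
  have hu₁ : g₁ u = g₁ z := eq_of_eqOn_relSet g₁ fun i hi => by
    by_cases hi₀ : i ∈ relSet g₀
    · have hiI := Finset.mem_inter.mpr ⟨hi₀, hi⟩
      simp [u, hi₀, hyα i hiI, hzα i hiI]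
    · simp [u, hi₀]
  have huu : g₀ u ≤ g₁ u := hle u
  rw [hu₀, hu₁, hy, hz] at huu
  exact Bool.noConfusion (Bool.eq_false_of_le_false huu)

lemma Monotone.apply_bot_eq_false {g : (Fin n → Bool) → Bool} (hg : Monotone g)
    (hne : ∃ x y, g x ≠ g y) : g ⊥ = false := by
  by_contra h
  rw [Bool.not_eq_false] at h
  have hall : ∀ x, g x = true := fun x => le_antisymm (Bool.le_true _) (h ▸ hg bot_le)
  obtain ⟨x, y, hxy⟩ := hne
  exact hxy (by rw [hall x, hall y])

lemma Monotone.apply_top_eq_true {g : (Fin n → Bool) → Bool} (hg : Monotone g)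
    (hne : ∃ x y, g x ≠ g y) : g ⊤ = true := by
  by_contra h
  rw [Bool.not_eq_true] at h
  have hall : ∀ x, g x = false := fun x => Bool.eq_false_of_le_false (h ▸ hg le_top)
  obtain ⟨x, y, hxy⟩ := hne
  exact hxy (by rw [hall x, hall y])

lemma monotone_restrict {f : (Fin n → Bool) → Bool} (hf : Monotone f) (H : Finset (Fin n))
    (α : Fin n → Bool) : Monotone (restrict f H α) :=
  fun _ _ hxy => hf fun i => by split_ifs <;> simp [hxy i]

lemma restrict_mono {f : (Fin n → Bool) → Bool} (hf : Monotone f) (H : Finset (Fin n))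
    {α β : Fin n → Bool} (hαβ : α ≤ β) : restrict f H α ≤ restrict f H β :=
  fun _ => hf fun i => by split_ifs <;> simp [hαβ i]

theorem cminVal_false_add_cminVal_true_le {g₀ g₁ : (Fin n → Bool) → Bool} (hm₀ : Monotone g₀)
    (hm₁ : Monotone g₁) (hle : g₀ ≤ g₁) (hne₀ : ∃ x y, g₀ x ≠ g₀ y) (hne₁ : ∃ x y, g₁ x ≠ g₁ y) :
    cminVal false g₀ + cminVal true g₁ ≤ (relSet g₀ ∩ relSet g₁).card + 1 := by
  set I := relSet g₀ ∩ relSet g₁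
  let ind : Finset (Fin n) → Fin n → Bool := fun S i => decide (i ∈ S)
  obtain ⟨S, hSI, j, -, hjS, hS, hSj⟩ :=
    Finset.exists_insert_not_of_empty_of_not (P := fun S => Forces g₀ I (ind S) false) I
      ((forces_false_or_forces_true hle (ind ∅)).resolve_right fun h => by
        simpa [hm₁.apply_bot_eq_false hne₁] using h ⊥ (by simp [ind]))
      fun h => by simpa [hm₀.apply_top_eq_true hne₀] using h ⊤ (by simp [ind])
  have h₀ : g₀ (fun i => !decide (i ∈ I \ S)) = false :=
    hS _ fun i hi => by by_cases hiS : i ∈ S <;> simp [ind, hi, hiS]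
  have h₁ : g₁ (ind (insert j S)) = true :=
    ((forces_false_or_forces_true hle _).resolve_left hSj).apply_eq
  have hc₀ : cminVal false g₀ ≤ (I \ S).card := by
    refine (cminVal_le_of_forces (hm₀.forces_false h₀)).trans_eq (congrArg _ ?_)
    ext; simp
  have hc₁ : cminVal true g₁ ≤ (insert j S).card := by
    refine (cminVal_le_of_forces (hm₁.forces_true h₁)).trans_eq (congrArg _ ?_)
    ext; simp [ind]
  calc cminVal false g₀ + cminVal true g₁ ≤ (I \ S).card + (insert j S).card := add_le_add hc₀ hc₁
    _ = I.card + 1 := by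
      rw [Finset.card_sdiff_of_subset hSI, Finset.card_insert_of_notMem hjS]
      have := Finset.card_le_card hSI
      omega

end BF

/-- for a monotone `f` with subfunctions `f₀ = f_{x_k=0}` and
`f₁ = f_{x_k=1}` at the root variable `x_k`, if neither is constant then
`C⁰_min(f₀) + C¹_min(f₁) ≤ |R(f₀) ∩ R(f₁)| + 1`. -/
theorem stmt17 {n : ℕ} (f : (Fin n → Bool) → Bool) (hmono : Monotone f)
    (k : Fin n)
    (f0 f1 : (Fin n → Bool) → Bool)
    (hf0 : f0 = restrict f {k} (fun _ => false))
    (hf1 : f1 = restrict f {k} (fun _ => true))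
    (h0 : ∃ x y, f0 x ≠ f0 y) (h1 : ∃ x y, f1 x ≠ f1 y) :
    cminVal false f0 + cminVal true f1 ≤ (relSet f0 ∩ relSet f1).card + 1 := by
  subst hf0 hf1
  exact cminVal_false_add_cminVal_true_le (monotone_restrict hmono _ _)
    (monotone_restrict hmono _ _) (restrict_mono hmono _ fun _ => Bool.false_le _) h0 h1
end
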